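/- Let n ≥ 1 and suppose that for each pair 1 ≤ i < j ≤ n we are given m_{ij} ∈ ℝ ∪ {−∞} and M_{ij} ∈ ℝ ∪ {+∞} with m_{ij} < M_{ij}. Then there exists a point x ∈ ℝⁿ with x₁ + x₂ + ⋯ + x_n = 0 satisfying m_{ij} < x_i − x_j < M_{ij} for all 1 ≤ i < j ≤ n if and only if the associated weighted digraph is m-acyclic, i.e., contains no directed cycle whose total edge weight is nonnegative. -/

import Mathlib

/-- Cyclically consecutive pairs along a list of vertices. -/
def cpairs {n : ℕ} (c : List (Fin n)) : List (Fin n × Fin n) := c.zip (c.rotate 1)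

/-- `c` is a directed cycle of the weighted digraph with (extended-real) weight
function `w`, an edge `u → v` being present when `w u v ≠ ⊥`. -/
def IsCycleE {n : ℕ} (w : Fin n → Fin n → EReal) (c : List (Fin n)) : Prop :=
  2 ≤ c.length ∧ c.Nodup ∧ ∀ p ∈ cpairs c, w p.1 p.2 ≠ ⊥

/-- Total weight of the edges of a cycle. -/
noncomputable def cycWeightE {n : ℕ} (w : Fin n → Fin n → EReal) (c : List (Fin n)) : EReal :=
  ((cpairs c).map fun p => w p.1 p.2).sum

/-- A weighted digraph is `m`-acyclic if it has no directed cycle of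
nonnegative total weight. -/
def MAcyclicE {n : ℕ} (w : Fin n → Fin n → EReal) : Prop :=
  ∀ c : List (Fin n), IsCycleE w c → ¬ (0 ≤ cycWeightE w c)

/-- The weighted digraph associated to the system `m i j < x i - x j < M i j`
(`i < j`): an edge `i → j` of weight `m i j` when `m i j ≠ -∞`, and an edge
`j → i` of weight `-(M i j)` when `M i j ≠ +∞`. -/
noncomputable def assocW {n : ℕ} (m M : Fin n → Fin n → EReal) (u v : Fin n) : EReal :=
  if u < v then m u v else -(M v u)

/-!
If `x` solves the system then every edge `u → v` has weight `< x u - x v`, and these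
differences telescope to `0` around a cycle, so every cycle is negative. Conversely, if all
cycles are negative, then raising every weight by a small `ε > 0` still leaves all simple
cycles nonpositive (there are finitely many), and the maximal weight of a simple path
starting at `u` is then a potential `d` with `w u v + ε ≤ d u - d v`; centring `d` gives `x`.
Missing edges carry the weight `⊥`, which absorbs every sum, so cycles through them never
obstruct the argument.
-/

section Paths

variable {α M : Type*}

def pathWeight [AddMonoid M] (w : α → α → M) : List α → M
  | [] => 0
  | [_] => 0
  | a :: b :: l => w a b + pathWeight w (b :: l)

@[simp] lemma pathWeight_nil [AddMonoid M] (w : α → α → M) : pathWeight w [] = 0 := rfl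

@[simp] lemma pathWeight_singleton [AddMonoid M] (w : α → α → M) (a : α) :
    pathWeight w [a] = 0 := rfl

@[simp] lemma pathWeight_cons_cons [AddMonoid M] (w : α → α → M) (a b : α) (l : List α) :
    pathWeight w (a :: b :: l) = w a b + pathWeight w (b :: l) := rfl

lemma pathWeight_append_cons [AddMonoid M] (w : α → α → M) (u : α) (t : List α) :
    ∀ s : List α, pathWeight w (s ++ u :: t) = pathWeight w (s ++ [u]) + pathWeight w (u :: t)
  | [] => by simp
  | [a] => by simp
  | a :: b :: s => by
    simp only [List.cons_append, pathWeight_cons_cons, add_assoc]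
    rw [← List.cons_append, pathWeight_append_cons w u t (b :: s), List.cons_append]

lemma pathWeight_sub [AddCommGroup M] (x : α → M) (a z : α) :
    ∀ l : List α, pathWeight (fun u v => x u - x v) (a :: l ++ [z]) = x a - x z
  | [] => by simp
  | b :: l => by
    have ih := pathWeight_sub x b z l
    simp only [List.cons_append, pathWeight_cons_cons] at ih ⊢
    rw [ih]
    abel

lemma pathWeight_ne_top {w : α → α → EReal} (hw : ∀ u v, u ≠ v → w u v ≠ ⊤) :
    ∀ {p : List α}, p.Nodup → pathWeight w p ≠ ⊤
  | [], _ => by simp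
  | [_], _ => by simp
  | a :: b :: l, hp => by
    rw [pathWeight_cons_cons]
    refine (EReal.add_lt_top (hw a b ?_) (pathWeight_ne_top hw hp.of_cons)).ne
    exact fun hab => (List.nodup_cons.1 hp).1 (hab ▸ List.mem_cons_self)

lemma sum_map_zip_append_singleton [AddMonoid M] (w : α → α → M) (z : α) :
    ∀ (a : α) (l : List α),
      (((a :: l).zip (l ++ [z])).map fun p => w p.1 p.2).sum = pathWeight w (a :: l ++ [z])
  | a, [] => by simp
  | a, b :: l => by
    have ih := sum_map_zip_append_singleton w z b l
    simp only [List.cons_append, List.zip_cons_cons, List.map_cons, List.sum_cons,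
      pathWeight_cons_cons] at ih ⊢
    rw [ih]

end Paths

namespace EReal

lemma list_sum_eq_bot_of_mem {l : List EReal} (h : ⊥ ∈ l) : l.sum = ⊥ := by
  induction l with
  | nil => simp at h
  | cons a l ih =>
    rcases List.mem_cons.1 h with rfl | h
    · exact bot_add _
    · rw [List.sum_cons, ih h, add_bot]

lemma sum_map_lt_coe_sum_map {ι : Type*} {f : ι → EReal} {g : ι → ℝ} :
    ∀ {l : List ι}, l ≠ [] → (∀ i ∈ l, f i < g i) → (l.map f).sum < ((l.map g).sum : ℝ)
  | [a], _, h => by simpa using h a (by simp)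
  | a :: b :: l, _, h => by
    have ih := sum_map_lt_coe_sum_map (List.cons_ne_nil b l)
      fun i hi => h i (List.mem_cons_of_mem a hi)
    rw [List.map_cons, List.sum_cons, List.map_cons (f := g), List.sum_cons, coe_add]
    exact add_lt_add (h a List.mem_cons_self) ih

lemma lt_of_add_pos_le {a : EReal} {ε t : ℝ} (ha : a ≠ ⊤) (hε : 0 < ε) (h : a + ε ≤ t) :
    a < t := by
  induction a using EReal.rec with
  | bot => exact bot_lt_coe t
  | coe a => exact_mod_cast (lt_add_of_pos_right a hε).trans_le (by exact_mod_cast h)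
  | top => exact absurd rfl ha

end EReal

section Cycles

variable {n : ℕ}

lemma sum_map_cpairs_cons {M : Type*} [AddMonoid M] (w : Fin n → Fin n → M) (a : Fin n)
    (l : List (Fin n)) :
    ((cpairs (a :: l)).map fun p => w p.1 p.2).sum = pathWeight w (a :: l ++ [a]) := by
  rw [cpairs, List.rotate_cons_succ, List.rotate_zero, sum_map_zip_append_singleton]

lemma fst_ne_snd_of_mem_cpairs {c : List (Fin n)} (hc : c.Nodup) (hlen : 2 ≤ c.length)
    {p : Fin n × Fin n} (hp : p ∈ cpairs c) : p.1 ≠ p.2 := by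
  obtain ⟨i, hi, rfl⟩ := List.mem_iff_getElem.1 hp
  have hic : i < c.length := List.lt_length_left_of_zip hi
  simp only [cpairs, List.getElem_zip, List.getElem_rotate]
  intro heq
  have := (hc.getElem_inj_iff).1 heq
  rcases Nat.lt_or_ge (i + 1) c.length with h | h
  · rw [Nat.mod_eq_of_lt h] at this; omega
  · rw [show i + 1 = c.length by omega, Nat.mod_self] at this; omega

lemma cycWeightE_cons (w : Fin n → Fin n → EReal) (a : Fin n) (l : List (Fin n)) :
    cycWeightE w (a :: l) = pathWeight w (a :: l ++ [a]) :=
  sum_map_cpairs_cons w a l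

lemma cycWeightE_add_const (w : Fin n → Fin n → EReal) (ε : ℝ) (c : List (Fin n)) :
    cycWeightE (fun u v => w u v + ε) c = cycWeightE w c + ((c.length * ε : ℝ) : EReal) := by
  have hlen : (cpairs c).length = c.length := by simp [cpairs]
  rw [cycWeightE, cycWeightE, List.sum_map_add, List.map_const', List.sum_replicate, hlen,
    ← EReal.coe_nsmul, nsmul_eq_mul]

lemma mAcyclicE_of_lt_sub {w : Fin n → Fin n → EReal} (x : Fin n → ℝ)
    (h : ∀ u v, u ≠ v → w u v < ((x u - x v : ℝ) : EReal)) : MAcyclicE w := by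
  rintro c ⟨hlen, hnd, -⟩ hnonneg
  obtain ⟨a, l, rfl⟩ : ∃ a l, c = a :: l := List.exists_cons_of_length_pos (by omega)
  have hlt := EReal.sum_map_lt_coe_sum_map (l := cpairs (a :: l))
    (by simp [cpairs]) fun p hp => h p.1 p.2 (fst_ne_snd_of_mem_cpairs hnd hlen hp)
  rw [sum_map_cpairs_cons (fun u v => x u - x v), pathWeight_sub, sub_self, EReal.coe_zero] at hlt
  exact not_le.2 hlt hnonneg

end Cycles

section Potential

variable {n : ℕ} {w : Fin n → Fin n → EReal}

lemma exists_simple_path_ge_cons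
    (hcyc : ∀ c : List (Fin n), 2 ≤ c.length → c.Nodup → cycWeightE w c ≤ 0)
    {u v : Fin n} (huv : u ≠ v) {p : List (Fin n)} (hp : p.Nodup) (hpv : p.head? = some v) :
    ∃ q : List (Fin n), q.Nodup ∧ q.head? = some u ∧ w u v + pathWeight w p ≤ pathWeight w q := by
  obtain ⟨t, rfl⟩ : ∃ t, p = v :: t := List.head?_eq_some_iff.1 hpv
  by_cases hu : u ∈ v :: t
  -- the segment of `p` before `u`, closed up by `u → v`, is a simple cycle
  · obtain ⟨s, r, hsplit⟩ := List.append_of_mem hu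
    obtain ⟨s, rfl⟩ : ∃ s', s = v :: s' := by
      cases s with
      | nil => exact absurd (List.cons.inj hsplit).1 (Ne.symm huv)
      | cons a s => exact ⟨s, by rw [(List.cons.inj hsplit).1]⟩
    rw [hsplit] at hp ⊢
    have hcycle := hcyc (u :: v :: s) (by simp) <|
      (List.perm_append_singleton u (v :: s)).nodup_iff.1
        (hp.sublist (((List.nil_sublist r).cons_cons u).append_left (v :: s)))
    refine ⟨u :: r, (List.nodup_append.1 hp).2.1, rfl, ?_⟩
    simp only [cycWeightE_cons, List.cons_append, pathWeight_cons_cons] at hcycle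
    calc w u v + pathWeight w (v :: s ++ u :: r)
        = (w u v + pathWeight w (v :: s ++ [u])) + pathWeight w (u :: r) := by
          rw [pathWeight_append_cons, add_assoc]
      _ ≤ 0 + pathWeight w (u :: r) := add_le_add_left hcycle _
      _ = pathWeight w (u :: r) := zero_add _
  · exact ⟨u :: v :: t, List.nodup_cons.2 ⟨hu, hp⟩, rfl, le_rfl⟩

lemma exists_potential_of_cycWeightE_nonpos (htop : ∀ u v, u ≠ v → w u v ≠ ⊤)
    (hcyc : ∀ c : List (Fin n), 2 ≤ c.length → c.Nodup → cycWeightE w c ≤ 0) :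
    ∃ d : Fin n → ℝ, ∀ u v, u ≠ v → w u v ≤ ((d u - d v : ℝ) : EReal) := by
  have hfin : ∀ u : Fin n, {p : List (Fin n) | p.Nodup ∧ p.head? = some u}.Finite := fun u =>
    (List.finite_length_le (Fin n) n).subset fun p hp => by
      simpa using hp.1.length_le_card
  choose P hP hmax using fun u =>
    Set.exists_max_image _ (pathWeight w) (hfin u) ⟨[u], by simp⟩
  have hreal : ∀ u, ((pathWeight w (P u)).toReal : EReal) = pathWeight w (P u) := fun u =>
    EReal.coe_toReal (pathWeight_ne_top htop (hP u).1)
      (ne_bot_of_le_ne_bot EReal.zero_ne_bot (hmax u [u] (by simp)))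
  refine ⟨fun u => (pathWeight w (P u)).toReal, fun u v huv => ?_⟩
  obtain ⟨q, hq, hqu, hle⟩ := exists_simple_path_ge_cons hcyc huv (hP v).1 (hP v).2
  rw [EReal.coe_sub, EReal.le_sub_iff_add_le (.inl (EReal.coe_ne_bot _))
    (.inl (EReal.coe_ne_top _)), hreal, hreal]
  exact hle.trans (hmax u q ⟨hq, hqu⟩)

end Potential

section Acyclic

variable {n : ℕ} {w : Fin n → Fin n → EReal}

lemma MAcyclicE.exists_cycWeightE_le (h : MAcyclicE w) :
    ∃ γ : ℝ, γ < 0 ∧ ∀ c, IsCycleE w c → cycWeightE w c ≤ γ := by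
  have hfin : {c : List (Fin n) | IsCycleE w c}.Finite :=
    (List.finite_length_le (Fin n) n).subset fun c hc => by
      simpa using hc.2.1.length_le_card
  have hsup : hfin.toFinset.sup (cycWeightE w) < 0 :=
    (Finset.sup_lt_iff EReal.bot_lt_zero).2 fun c hc =>
      not_le.1 (h c (hfin.mem_toFinset.1 hc))
  obtain ⟨γ, hsupγ, hγ⟩ := EReal.lt_iff_exists_real_btwn.1 hsup
  exact ⟨γ, by exact_mod_cast hγ, fun c hc =>
    (Finset.le_sup (hfin.mem_toFinset.2 hc)).trans hsupγ.le⟩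

lemma MAcyclicE.exists_potential_lt (htop : ∀ u v, u ≠ v → w u v ≠ ⊤) (h : MAcyclicE w) :
    ∃ d : Fin n → ℝ, ∀ u v, u ≠ v → w u v < ((d u - d v : ℝ) : EReal) := by
  obtain ⟨γ, hγ, hcyc⟩ := h.exists_cycWeightE_le
  set ε : ℝ := -γ / (n + 1) with hε
  have hεpos : 0 < ε := div_pos (neg_pos.2 hγ) (by positivity)
  have hcyc' : ∀ c : List (Fin n), 2 ≤ c.length → c.Nodup →
      cycWeightE (fun u v => w u v + ε) c ≤ 0 := by
    intro c hlen hnd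
    rw [cycWeightE_add_const]
    by_cases hedges : ∀ p ∈ cpairs c, w p.1 p.2 ≠ ⊥
    · have hlen' : (c.length : ℝ) ≤ n := by exact_mod_cast hnd.length_le_card.trans_eq (by simp)
      have : γ + c.length * ε ≤ 0 := by
        have hnε : (n + 1) * ε = -γ := by rw [hε]; field_simp
        nlinarith
      calc cycWeightE w c + ((c.length * ε : ℝ) : EReal)
          ≤ (γ : EReal) + ((c.length * ε : ℝ) : EReal) :=
            add_le_add (hcyc c ⟨hlen, hnd, hedges⟩) le_rfl
        _ ≤ 0 := by exact_mod_cast this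
    · push Not at hedges
      obtain ⟨p, hp, hbot⟩ := hedges
      rw [cycWeightE, EReal.list_sum_eq_bot_of_mem (List.mem_map.2 ⟨p, hp, hbot⟩),
        EReal.bot_add]
      exact bot_le
  obtain ⟨d, hd⟩ := exists_potential_of_cycWeightE_nonpos
    (fun u v huv => (EReal.add_lt_top (htop u v huv) (EReal.coe_ne_top ε)).ne) hcyc'
  exact ⟨d, fun u v huv => EReal.lt_of_add_pos_le (htop u v huv) hεpos (hd u v huv)⟩

end Acyclic

lemma exists_sum_eq_zero_sub_eq {ι : Type*} [Fintype ι] (d : ι → ℝ) :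
    ∃ x : ι → ℝ, ∑ i, x i = 0 ∧ ∀ i j, x i - x j = d i - d j := by
  refine ⟨fun i => d i - (∑ j, d j) / Fintype.card ι, ?_, fun i j => by ring⟩
  rcases isEmpty_or_nonempty ι with hι | hι
  · simp
  · rw [Finset.sum_sub_distrib, Finset.sum_const, Finset.card_univ, nsmul_eq_mul,
      mul_div_cancel₀ _ (by exact_mod_cast Fintype.card_ne_zero), sub_self]

section AssocW

variable {n : ℕ} {m M : Fin n → Fin n → EReal}

lemma assocW_ne_top (hm : ∀ i j : Fin n, i < j → m i j ≠ ⊤)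
    (hM : ∀ i j : Fin n, i < j → M i j ≠ ⊥) {u v : Fin n} (huv : u ≠ v) :
    assocW m M u v ≠ ⊤ := by
  unfold assocW
  split_ifs with h
  · exact hm u v h
  · rw [Ne, EReal.neg_eq_top_iff]
    exact hM v u (lt_of_le_of_ne (not_lt.1 h) huv.symm)

lemma forall_lt_and_lt_iff_assocW_lt (x : Fin n → ℝ) :
    (∀ i j : Fin n, i < j →
        m i j < ((x i - x j : ℝ) : EReal) ∧ ((x i - x j : ℝ) : EReal) < M i j) ↔
      ∀ u v, u ≠ v → assocW m M u v < ((x u - x v : ℝ) : EReal) := by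
  have hneg : ∀ i j, -M i j < ((x j - x i : ℝ) : EReal) ↔ ((x i - x j : ℝ) : EReal) < M i j :=
    fun i j => by rw [EReal.neg_lt_comm, ← EReal.coe_neg, neg_sub]
  have hlt : ∀ {i j}, i < j → assocW m M i j = m i j := fun h => if_pos h
  have hgt : ∀ {i j}, i < j → assocW m M j i = -M i j := fun h => if_neg h.not_gt
  constructor
  · intro h u v huv
    rcases lt_or_gt_of_ne huv with huv | hvu
    · exact hlt huv ▸ (h u v huv).1
    · exact hgt hvu ▸ (hneg v u).2 (h v u hvu).2
  · intro h i j hij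
    exact ⟨hlt hij ▸ h i j hij.ne, (hneg i j).1 (hgt hij ▸ h j i hij.ne')⟩

end AssocW

theorem stmt0_general (n : ℕ) (m M : Fin n → Fin n → EReal)
    (hm : ∀ i j : Fin n, i < j → m i j ≠ ⊤)
    (hM : ∀ i j : Fin n, i < j → M i j ≠ ⊥) :
    (∃ x : Fin n → ℝ, (∑ i, x i) = 0 ∧
      ∀ i j : Fin n, i < j →
        m i j < ((x i - x j : ℝ) : EReal) ∧ ((x i - x j : ℝ) : EReal) < M i j)
    ↔ MAcyclicE (assocW m M) := by
  constructor
  · rintro ⟨x, -, hx⟩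
    exact mAcyclicE_of_lt_sub x ((forall_lt_and_lt_iff_assocW_lt x).1 hx)
  · intro h
    obtain ⟨d, hd⟩ := h.exists_potential_lt fun u v => assocW_ne_top hm hM
    obtain ⟨x, hx0, hxd⟩ := exists_sum_eq_zero_sub_eq d
    refine ⟨x, hx0, (forall_lt_and_lt_iff_assocW_lt x).2 fun u v huv => ?_⟩
    rw [hxd]
    exact hd u v huv

theorem stmt0 (n : ℕ) (hn : 1 ≤ n) (m M : Fin n → Fin n → EReal)
    (hm : ∀ i j : Fin n, i < j → m i j ≠ ⊤)
    (hM : ∀ i j : Fin n, i < j → M i j ≠ ⊥)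
    (hlt : ∀ i j : Fin n, i < j → m i j < M i j) :
    (∃ x : Fin n → ℝ, (∑ i, x i) = 0 ∧
      ∀ i j : Fin n, i < j →
        m i j < ((x i - x j : ℝ) : EReal) ∧ ((x i - x j : ℝ) : EReal) < M i j)
    ↔ MAcyclicE (assocW m M) :=
  stmt0_general n m M hm hM
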